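/- arXiv:1411.2289 — 4 statements merged into one kernel-verified Lean document; each statement's English description precedes it below -/
import Mathlib

section
/- Every non-empty Z^d shift space X satisfying topological strong spatial mixing with gap g contains a periodic point of period 2g in every coordinate direction. -/
abbrev Site (d : ℕ) := Fin d → ℤ

def dist1 {d : ℕ} (p q : Site d) : ℕ := ∑ i, (p i - q i).natAbs

def unitVec {d : ℕ} (i : Fin d) : Site d := fun j => if j = i then 1 else 0

def IsShiftSpace {d : ℕ} {A : Type*} [TopologicalSpace A] (X : Set (Site d → A)) : Prop :=
  IsClosed X ∧ ∀ t : Site d, (fun (x : Site d → A) (q : Site d) => x (q + t)) '' X = X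

def TSSM {d : ℕ} {A : Type*} (X : Set (Site d → A)) (g : ℕ) : Prop :=
  ∀ U S V : Set (Site d), U.Finite → S.Finite → V.Finite →
    Disjoint U S → Disjoint S V → Disjoint U V →
    (∀ p ∈ U, ∀ q ∈ V, g ≤ dist1 p q) →
    ∀ u s v : Site d → A,
      (∃ x ∈ X, (∀ p ∈ U, x p = u p) ∧ (∀ p ∈ S, x p = s p)) →
      (∃ x ∈ X, (∀ p ∈ S, x p = s p) ∧ (∀ p ∈ V, x p = v p)) →
      ∃ x ∈ X, (∀ p ∈ U, x p = u p) ∧ (∀ p ∈ S, x p = s p) ∧ ∀ p ∈ V, x p = v p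

/-!
Split the fundamental domain `[0, 2g)^d` of the lattice `2g ℤ^d` into its `2^d` subboxes of
side `g`. Two translates of the same subbox by distinct lattice vectors are at distance at
least `g`, so by TSSM one may overwrite a configuration, simultaneously on all the copies of a
subbox, with the matching translates of the current point, while keeping the values on the
region where it is already `2g`-periodic. Treating the subboxes one after the other (each step
a compactness argument over finite windows) yields a point that is `2g`-periodic everywhere.
-/

theorem IsClosed.exists_mem_forall_of_finset {ι A : Type*} [TopologicalSpace A]
    [DiscreteTopology A] [Finite A] {X : Set (ι → A)} (hX : IsClosed X) (Q : ι → A → Prop)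
    (h : ∀ F : Finset ι, ∃ z ∈ X, ∀ p ∈ F, Q p (z p)) :
    ∃ z ∈ X, ∀ p, Q p (z p) := by
  obtain ⟨z, hzX, hz⟩ := hX.isCompact.inter_iInter_nonempty (fun p => {z | Q p (z p)})
    (fun p => (isClosed_discrete _).preimage (continuous_apply p))
    (fun F => by simpa [Set.Nonempty] using h F)
  exact ⟨z, hzX, Set.mem_iInter.mp hz⟩

variable {d : ℕ}

theorem IsShiftSpace.shift_mem {A : Type*} [TopologicalSpace A] {X : Set (Site d → A)}
    (hX : IsShiftSpace X) {x : Site d → A} (hx : x ∈ X) (t : Site d) :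
    (fun q => x (q + t)) ∈ X :=
  hX.2 t ▸ ⟨x, hx, rfl⟩

theorem TSSM.exists_glue {A : Type*} {X : Set (Site d → A)} {g : ℕ} (h : TSSM X g)
    {F K : Set (Site d)} (hF : F.Finite) {z w : Site d → A} (hz : z ∈ X) (hw : w ∈ X)
    (hzw : ∀ p ∈ F, p ∉ K → ∀ q ∈ K, dist1 p q < g → z p = w p) :
    ∃ x ∈ X, (∀ p ∈ F, p ∉ K → x p = z p) ∧ ∀ p ∈ F, p ∈ K → x p = w p := by
  set U := {p | p ∈ F ∧ p ∉ K ∧ ∀ q ∈ K, g ≤ dist1 p q}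
  set S := {p | p ∈ F ∧ p ∉ K ∧ ∃ q ∈ K, dist1 p q < g}
  obtain ⟨x, hxX, hxU, hxS, hxV⟩ := h U S (F ∩ K) (hF.subset fun p hp => hp.1)
    (hF.subset fun p hp => hp.1) (hF.subset Set.inter_subset_left)
    (Set.disjoint_left.mpr fun p hpU ⟨_, _, q, hq, hpq⟩ => (hpU.2.2 q hq).not_gt hpq)
    (Set.disjoint_left.mpr fun p hpS hpV => hpS.2.1 hpV.2)
    (Set.disjoint_left.mpr fun p hpU hpV => hpU.2.1 hpV.2)
    (fun p hp q hq => hp.2.2 q hq.2) z z w ⟨z, hz, fun _ _ => rfl, fun _ _ => rfl⟩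
    ⟨w, hw, fun p ⟨hpF, hpK, q, hq, hpq⟩ => (hzw p hpF hpK q hq hpq).symm, fun _ _ => rfl⟩
  refine ⟨x, hxX, fun p hpF hpK => ?_, fun p hpF hpK => hxV p ⟨hpF, hpK⟩⟩
  by_cases hfar : ∀ q ∈ K, g ≤ dist1 p q
  · exact hxU p ⟨hpF, hpK, hfar⟩
  · push Not at hfar
    exact hxS p ⟨hpF, hpK, hfar⟩

theorem le_dist1_of_le_abs_sub {p q : Site d} (j : Fin d) {g : ℕ} (h : (g : ℤ) ≤ |p j - q j|) :
    g ≤ dist1 p q := by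
  calc g ≤ (p j - q j).natAbs := by rwa [Int.abs_eq_natAbs, Nat.cast_le] at h
    _ ≤ dist1 p q := Finset.single_le_sum (f := fun i => (p i - q i).natAbs)
        (fun i _ => Nat.zero_le _) (Finset.mem_univ j)

namespace Site

def res (m : ℤ) (p : Site d) : Site d := fun j => p j % m

def cell (m : ℤ) (p : Site d) : Site d := fun j => p j / m

theorem res_res (m : ℤ) (p : Site d) : res m (res m p) = res m p :=
  funext fun _ => Int.emod_emod_of_dvd _ dvd_rfl

theorem res_add_smul (m : ℤ) (p v : Site d) : res m (p + m • v) = res m p :=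
  funext fun j => Int.add_mul_emod_self_left (p j) m (v j)

theorem res_sub_smul (m : ℤ) (p v : Site d) : res m (p - m • v) = res m p := by
  rw [sub_eq_add_neg, ← smul_neg, res_add_smul]

theorem sub_smul_cell (m : ℤ) (p : Site d) : p - m • cell m p = res m p :=
  funext fun j => (Int.emod_def (p j) m).symm

/-- `W` is a set of residues: `x` is `m`-periodic on the union of the translates of `W` by `m ℤ^d`. -/
def IsPeriodicOn {A : Type*} (m : ℤ) (W : Set (Site d)) (x : Site d → A) : Prop :=
  ∀ p, res m p ∈ W → x p = x (res m p)

theorem IsPeriodicOn.apply_add_smul {A : Type*} {m : ℤ} {x : Site d → A}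
    (hx : IsPeriodicOn m Set.univ x) (p v : Site d) : x (p + m • v) = x p := by
  rw [hx _ trivial, res_add_smul, ← hx p trivial]

section Extension

variable {A : Type*} [TopologicalSpace A] {X : Set (Site d → A)} {g : ℕ} {m : ℤ}
  {W C : Set (Site d)} {R : Site d → A}

theorem exists_agree_on_cells (hX : IsShiftSpace X) (h : TSSM X g)
    (hC : ∀ p q, res m p ∈ C → res m q ∈ C → cell m p ≠ cell m q → g ≤ dist1 p q)
    (hR : R ∈ X) (hRW : IsPeriodicOn m W R) (F : Finset (Site d)) (T : Finset (Site d)) :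
    ∃ z ∈ X, ∀ p ∈ F, res m p ∈ W ∨ res m p ∈ C ∧ cell m p ∈ T → z p = R (res m p) := by
  induction T using Finset.induction_on with
  | empty => exact ⟨R, hR, fun p _ hp => hRW p (by simpa using hp)⟩
  | @insert v T hvT ih =>
    obtain ⟨z, hzX, hz⟩ := ih
    set K := {q | res m q ∈ C ∧ cell m q = v}
    have hwW : ∀ p, res m p ∈ W → R (p - m • v) = R (res m p) := fun p hp => by
      rw [hRW _ (by rwa [res_sub_smul]), res_sub_smul]
    have hwK : ∀ p ∈ K, R (p - m • v) = R (res m p) := fun p hp => by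
      rw [← hp.2, sub_smul_cell]
    obtain ⟨x, hxX, hxz, hxw⟩ := h.exists_glue
      (F := {p | p ∈ F ∧ (res m p ∈ W ∨ res m p ∈ C ∧ cell m p ∈ insert v T)}) (K := K)
      (F.finite_toSet.subset fun p hp => hp.1) hzX (hX.shift_mem hR (-(m • v)))
      (by
        rintro p ⟨hpF, hpW | ⟨hpC, hpT⟩⟩ hpK q hqK hpq
        · exact (hz p hpF (.inl hpW)).trans (hwW p hpW).symm
        · have hpv : cell m p ≠ v := fun hpv => hpK ⟨hpC, hpv⟩
          exact absurd (hC p q hpC hqK.1 (hqK.2 ▸ hpv)) (not_le.mpr hpq))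
    refine ⟨x, hxX, fun p hpF hp => ?_⟩
    by_cases hpK : p ∈ K
    · exact (hxw p ⟨hpF, hp⟩ hpK).trans (hwK p hpK)
    · rw [hxz p ⟨hpF, hp⟩ hpK]
      refine hz p hpF (hp.imp_right fun ⟨hpC, hpT⟩ => ⟨hpC, ?_⟩)
      exact (Finset.mem_insert.mp hpT).resolve_left fun hpv => hpK ⟨hpC, hpv⟩

theorem exists_isPeriodicOn_union [DiscreteTopology A] [Finite A] (hX : IsShiftSpace X)
    (h : TSSM X g)
    (hC : ∀ p q, res m p ∈ C → res m q ∈ C → cell m p ≠ cell m q → g ≤ dist1 p q)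
    (hR : R ∈ X) (hRW : IsPeriodicOn m W R) :
    ∃ R' ∈ X, IsPeriodicOn m (W ∪ C) R' := by
  obtain ⟨R', hR'X, hR'⟩ := hX.1.exists_mem_forall_of_finset
    (fun p a => res m p ∈ W ∪ C → a = R (res m p)) fun F => by
      obtain ⟨z, hzX, hz⟩ := exists_agree_on_cells hX h hC hR hRW F (F.image (cell m))
      exact ⟨z, hzX, fun p hpF hp =>
        hz p hpF (hp.imp_right fun hpC => ⟨hpC, Finset.mem_image_of_mem _ hpF⟩)⟩
  refine ⟨R', hR'X, fun p hp => ?_⟩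
  rw [hR' p hp, hR' (res m p) (by rwa [res_res]), res_res]

end Extension

def subbox (g : ℤ) (ε : Fin d → Bool) : Set (Site d) :=
  Set.univ.pi fun j => Set.Ico (if ε j then g else 0) ((if ε j then g else 0) + g)

theorem res_mem_subbox {g : ℤ} (hg : 0 < g) (p : Site d) :
    res (2 * g) p ∈ subbox g fun j => decide (g ≤ p j % (2 * g)) := by
  intro j _
  have h0 : 0 ≤ p j % (2 * g) := Int.emod_nonneg _ (by omega)
  have h1 : p j % (2 * g) < 2 * g := Int.emod_lt_of_pos _ (by omega)
  by_cases hj : g ≤ p j % (2 * g) <;> simp [res, hj] <;> omega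

theorem le_abs_sub_of_emod_mem_Ico {g c a b : ℤ} (ha : a % (2 * g) ∈ Set.Ico c (c + g))
    (hb : b % (2 * g) ∈ Set.Ico c (c + g)) (hab : a / (2 * g) ≠ b / (2 * g)) :
    g ≤ |a - b| := by
  have hdiv := Int.mul_ediv_add_emod a (2 * g)
  have hdiv' := Int.mul_ediv_add_emod b (2 * g)
  obtain ⟨ha₁, ha₂⟩ := ha
  obtain ⟨hb₁, hb₂⟩ := hb
  rcases lt_or_gt_of_ne hab with hlt | hlt
  · have : 2 * g * (a / (2 * g)) + 2 * g ≤ 2 * g * (b / (2 * g)) := by nlinarith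
    rw [abs_sub_comm, le_abs]; left; linarith
  · have : 2 * g * (b / (2 * g)) + 2 * g ≤ 2 * g * (a / (2 * g)) := by nlinarith
    rw [le_abs]; left; linarith

theorem le_dist1_of_res_mem_subbox {g : ℕ} {ε : Fin d → Bool} {p q : Site d}
    (hp : res (2 * g) p ∈ subbox g ε) (hq : res (2 * g) q ∈ subbox g ε)
    (hpq : cell (2 * g) p ≠ cell (2 * g) q) : g ≤ dist1 p q := by
  obtain ⟨j, hj⟩ := Function.ne_iff.mp hpq
  exact le_dist1_of_le_abs_sub j
    (le_abs_sub_of_emod_mem_Ico (hp j trivial) (hq j trivial) hj)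

theorem exists_isPeriodicOn_iUnion_subbox {A : Type*} [TopologicalSpace A] [DiscreteTopology A]
    [Finite A] {X : Set (Site d → A)} (hX : IsShiftSpace X) (hne : X.Nonempty) {g : ℕ}
    (h : TSSM X g) (s : Finset (Fin d → Bool)) :
    ∃ R ∈ X, IsPeriodicOn (2 * g) (⋃ ε ∈ s, subbox g ε) R := by
  induction s using Finset.induction_on with
  | empty =>
    obtain ⟨R, hR⟩ := hne
    exact ⟨R, hR, fun p hp => by simp at hp⟩
  | @insert ε s _ ih =>
    obtain ⟨R, hRX, hRper⟩ := ih
    obtain ⟨R', hR'X, hR'⟩ :=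
      exists_isPeriodicOn_union hX h (fun p q => le_dist1_of_res_mem_subbox) hRX hRper
    refine ⟨R', hR'X, fun p hp => hR' p ?_⟩
    rw [Finset.set_biUnion_insert] at hp
    exact hp.symm

end Site

open Site in
/-- A non-empty shift space satisfying TSSM with gap `g` contains a point which is
periodic of period `2g` in every coordinate direction. -/
theorem tssm_periodic_point {d : ℕ} {A : Type*} [Fintype A]
    [TopologicalSpace A] [DiscreteTopology A]
    (X : Set (Site d → A)) (hX : IsShiftSpace X) (hne : X.Nonempty)
    (g : ℕ) (h : TSSM X g) :
    ∃ x ∈ X, ∀ (i : Fin d) (p : Site d), x (p + (2 * g) • unitVec i) = x p := by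
  rcases g.eq_zero_or_pos with rfl | hg
  · obtain ⟨x, hx⟩ := hne
    exact ⟨x, hx, by simp⟩
  obtain ⟨R, hRX, hR⟩ := exists_isPeriodicOn_iUnion_subbox hX hne h Finset.univ
  have hRper : IsPeriodicOn (2 * g) Set.univ R := fun p _ =>
    hR p (Set.mem_iUnion₂.mpr ⟨_, Finset.mem_univ _, res_mem_subbox (by exact_mod_cast hg) p⟩)
  refine ⟨R, hRX, fun i p => ?_⟩
  rw [← natCast_zsmul]
  push_cast
  exact hRper.apply_add_smul p (unitVec i)
end

section
/- Let X be a shift space satisfying TSSM with gap g, W a finite subset of Z^d, and w, w' globally admissible configurations on W differing exactly on the set {p_1, ..., p_k}. Then there exists a sequence w = w_1, w_2, ..., w_{k+1} = w' of globally admissible configurations on W such that for each 1 ≤ i ≤ k, the set of sites where w_i and w_{i+1} differ is contained in Σ_W(w,w') ∩ N_g(p_i), where N_g(p) is the ℓ^1-ball of radius g around p. -/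
def globallyAdm {d : ℕ} {A : Type*} (X : Set (Site d → A)) (S : Set (Site d))
    (u : Site d → A) : Prop := ∃ x ∈ X, ∀ p ∈ S, x p = u p

lemma dist1_comm {d : ℕ} (p q : Site d) : dist1 p q = dist1 q p := by
  unfold dist1
  refine Finset.sum_congr rfl fun i _ => ?_
  omega

/-- Key step: under TSSM, we can change a globally admissible configuration at a single
site `p₀` to the value of `w'`, only disturbing sites where `w` and `w'` differ that lie
within distance `g` of `p₀`. -/
lemma tssm_key {d : ℕ} {A : Type*}
    (X : Set (Site d → A)) (g : ℕ) (hT : TSSM X g)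
    (W : Set (Site d)) (hW : W.Finite) (w w' : Site d → A)
    (hw : globallyAdm X W w) (hw' : globallyAdm X W w')
    (p₀ : Site d) (hp₀W : p₀ ∈ W) (hp₀ : w p₀ ≠ w' p₀) :
    ∃ w₂ : Site d → A, globallyAdm X W w₂ ∧ w₂ p₀ = w' p₀ ∧
      ∀ q ∈ W, w q ≠ w₂ q → w q ≠ w' q ∧ dist1 q p₀ ≤ g := by
  obtain ⟨x', hx'X, hx'⟩ := hw'
  obtain ⟨y, hyX, hy⟩ := hw
  have hd0 : dist1 p₀ p₀ = 0 := by unfold dist1; simp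
  obtain ⟨x, hxX, hxU, hxS, hxV⟩ :=
    hT {p₀} {q ∈ W | dist1 q p₀ ≤ g ∧ q ≠ p₀ ∧ w q = w' q} {q ∈ W | g < dist1 q p₀}
      (Set.finite_singleton _) (hW.subset fun q hq => hq.1) (hW.subset fun q hq => hq.1)
      (by rw [Set.disjoint_left]; rintro q rfl hqS; exact hqS.2.2.1 rfl)
      (by rw [Set.disjoint_left]; intro q hqS hqV; exact absurd hqS.2.1 (not_le.mpr hqV.2))
      (by rw [Set.disjoint_left]; rintro q rfl hqV; have := hqV.2; omega)
      (by rintro a rfl b hb; have := hb.2; rw [dist1_comm]; omega)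
      w' w w
      ⟨x', hx'X, by rintro q rfl; exact hx' _ hp₀W,
        fun q hq => (hx' q hq.1).trans hq.2.2.2.symm⟩
      ⟨y, hyX, fun q hq => hy q hq.1, fun q hq => hy q hq.1⟩
  refine ⟨x, ⟨x, hxX, fun q _ => rfl⟩, hxU p₀ rfl, ?_⟩
  intro q hqW hne
  by_cases hd : dist1 q p₀ ≤ g
  · refine ⟨?_, hd⟩
    intro heq
    rcases eq_or_ne q p₀ with rfl | hne'
    · exact hp₀ heq
    · exact hne ((hxS q ⟨hqW, hd, hne', heq⟩).symm)
  · exact absurd ((hxV q ⟨hqW, not_le.mp hd⟩).symm) hne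

lemma tssm_pivot_aux {d : ℕ} {A : Type*}
    (X : Set (Site d → A)) (g : ℕ) (hT : TSSM X g)
    (W : Set (Site d)) (hW : W.Finite) :
    ∀ (k : ℕ) (w w' : Site d → A), globallyAdm X W w → globallyAdm X W w' →
    ∀ (p : Fin k → Site d), Function.Injective p →
    {q ∈ W | w q ≠ w' q} ⊆ Set.range p →
    ∃ ws : Fin (k + 1) → Site d → A,
      (∀ q ∈ W, ws 0 q = w q) ∧ (∀ q ∈ W, ws (Fin.last k) q = w' q) ∧
      (∀ i, globallyAdm X W (ws i)) ∧
      ∀ i : Fin k, ∀ q ∈ W, ws i.castSucc q ≠ ws i.succ q →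
        w q ≠ w' q ∧ dist1 q (p i) ≤ g := by
  intro k
  induction k with
  | zero =>
    intro w w' hw hw' p hp hSig
    refine ⟨fun _ => w, fun q _ => rfl, ?_, fun _ => hw, fun i => i.elim0⟩
    intro q hq
    show w q = w' q
    by_contra hne
    obtain ⟨i, -⟩ := hSig ⟨hq, hne⟩
    exact i.elim0
  | succ k ih =>
    intro w w' hw hw' p hp hSig
    -- produce `w₂` handling the pivot `p 0`
    have key : ∃ w₂ : Site d → A, globallyAdm X W w₂ ∧
        (∀ q ∈ W, w q ≠ w₂ q → w q ≠ w' q ∧ dist1 q (p 0) ≤ g) ∧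
        (∀ q ∈ W, w₂ q ≠ w' q → w q ≠ w' q) ∧
        {q ∈ W | w₂ q ≠ w' q} ⊆ Set.range (p ∘ Fin.succ) := by
      by_cases hc : p 0 ∈ W ∧ w (p 0) ≠ w' (p 0)
      · obtain ⟨w₂, hadm, hval, hdiff⟩ :=
          tssm_key X g hT W hW w w' hw hw' (p 0) hc.1 hc.2
        have hww' : ∀ q ∈ W, w₂ q ≠ w' q → w q ≠ w' q := by
          intro q hq hne heq
          have : w q ≠ w₂ q := fun h => hne (h ▸ heq)
          exact (hdiff q hq this).1 heq
        refine ⟨w₂, hadm, hdiff, hww', ?_⟩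
        intro q hq
        have hq' : w q ≠ w' q := hww' q hq.1 hq.2
        obtain ⟨i, hi⟩ := hSig ⟨hq.1, hq'⟩
        have hi0 : i ≠ 0 := by
          rintro rfl
          rw [← hi] at hq
          exact hq.2 hval
        obtain ⟨j, rfl⟩ := Fin.exists_succ_eq.mpr hi0
        exact ⟨j, hi⟩
      · refine ⟨w, hw, fun q _ h => absurd rfl h, fun q _ h => h, ?_⟩
        intro q hq
        obtain ⟨i, hi⟩ := hSig ⟨hq.1, hq.2⟩
        have hi0 : i ≠ 0 := by
          rintro rfl
          exact hc (by rw [hi]; exact ⟨hq.1, hq.2⟩)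
        obtain ⟨j, rfl⟩ := Fin.exists_succ_eq.mpr hi0
        exact ⟨j, hi⟩
    obtain ⟨w₂, hadm₂, hstep, hww', hrange⟩ := key
    obtain ⟨ws', h0', hlast', hadm', hdiff'⟩ :=
      ih w₂ w' hadm₂ hw' (p ∘ Fin.succ)
        (hp.comp (Fin.succ_injective _)) hrange
    refine ⟨Fin.cons w ws', ?_, ?_, ?_, ?_⟩
    · intro q _; rw [Fin.cons_zero]
    · intro q hq
      have : Fin.last (k + 1) = (Fin.last k).succ := rfl
      rw [this, Fin.cons_succ]
      exact hlast' q hq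
    · intro i
      refine Fin.cases ?_ ?_ i
      · rw [Fin.cons_zero]; exact hw
      · intro j; rw [Fin.cons_succ]; exact hadm' j
    · intro i
      refine Fin.cases ?_ ?_ i
      · intro q hq hne
        have e0 : Fin.castSucc (0 : Fin (k + 1)) = (0 : Fin (k + 2)) := rfl
        rw [e0, Fin.cons_zero, Fin.cons_succ, h0' q hq] at hne
        exact hstep q hq hne
      · intro j q hq hne
        rw [← Fin.succ_castSucc, Fin.cons_succ, Fin.cons_succ] at hne
        obtain ⟨h1, h2⟩ := hdiff' j q hq hne
        exact ⟨hww' q hq h1, h2⟩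

/-- The interpolating ("pivot") sequence: two globally admissible configurations on a finite
set `W` differing exactly on `{p 1, …, p k}` are joined by a sequence of globally admissible
configurations, where consecutive ones differ only inside `Σ_W(w,w') ∩ N_g(p i)`. -/
theorem tssm_pivot {d : ℕ} {A : Type*} [Fintype A]
    [TopologicalSpace A] [DiscreteTopology A]
    (X : Set (Site d → A)) (hX : IsShiftSpace X) (g : ℕ) (hT : TSSM X g)
    (W : Set (Site d)) (hW : W.Finite) (w w' : Site d → A)
    (hw : globallyAdm X W w) (hw' : globallyAdm X W w')
    (k : ℕ) (p : Fin k → Site d) (hp : Function.Injective p)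
    (hSig : {q ∈ W | w q ≠ w' q} = Set.range p) :
    ∃ ws : Fin (k + 1) → Site d → A,
      (∀ q ∈ W, ws 0 q = w q) ∧ (∀ q ∈ W, ws (Fin.last k) q = w' q) ∧
      (∀ i, globallyAdm X W (ws i)) ∧
      ∀ i : Fin k, ∀ q ∈ W, ws i.castSucc q ≠ ws i.succ q →
        w q ≠ w' q ∧ dist1 q (p i) ≤ g := by
  exact tssm_pivot_aux X g hT W hW k w w' hw hw' p hp (hSig ▸ Set.Subset.rfl)
end

section
/- A nearest-neighbour Z shift of finite type X is topologically mixing if and only if it satisfies topological strong spatial mixing (with some gap). -/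
/-- The nearest-neighbour ℤ SFT defined by the forbidden two-letter words `E a b`. -/
def nnSFT1 {A : Type*} (E : A → A → Prop) : Set (Site 1 → A) :=
  {x | ∀ p : Site 1, ¬ E (x p) (x (p + 1))}

/-- Topological mixing for a `ℤ^d` shift space. -/
def TopMixing {d : ℕ} {A : Type*} (X : Set (Site d → A)) : Prop :=
  ∀ U V : Set (Site d), U.Finite → V.Finite →
    ∃ g : ℕ, ∀ u v : Site d → A,
      (∃ x ∈ X, ∀ p ∈ U, x p = u p) → (∃ x ∈ X, ∀ q ∈ V, x q = v q) →
      ∀ t : Site d, (∀ p ∈ U, ∀ q ∈ V, g ≤ dist1 p (q + t)) →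
        ∃ x ∈ X, (∀ p ∈ U, x p = u p) ∧ ∀ q ∈ V, x (q + t) = v q

section Aux

variable {A : Type*} {E : A → A → Prop}

/-- The `ℤ`-indexed version of the SFT. -/
def zSFT (E : A → A → Prop) : Set (ℤ → A) := {x | ∀ n : ℤ, ¬ E (x n) (x (n + 1))}

lemma site_ext (p : Site 1) : (fun _ => p 0 : Site 1) = p :=
  funext fun i => by rw [Subsingleton.elim i 0]

lemma site_inj : Function.Injective (fun p : Site 1 => p 0) := by
  intro p q h
  rw [← site_ext p, ← site_ext q]
  simp only at h
  rw [h]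

lemma dist1_one (p q : Site 1) : dist1 p q = (p 0 - q 0).natAbs := by
  simp [dist1]

lemma dist1_self {d : ℕ} (p : Site d) : dist1 p p = 0 := by
  simp [dist1]

lemma zSFT_shift {x : ℤ → A} (hx : x ∈ zSFT E) (c : ℤ) :
    (fun n => x (n + c)) ∈ zSFT E := by
  intro n
  have h := hx (n + c)
  have e : n + c + 1 = n + 1 + c := by ring
  rw [e] at h
  exact h

lemma toZ_mem {x : Site 1 → A} (hx : x ∈ nnSFT1 E) :
    (fun n : ℤ => x (fun _ => n)) ∈ zSFT E := by
  intro n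
  have h := hx (fun _ => n)
  have e : ((fun _ => n) + 1 : Site 1) = (fun _ => n + 1) := by funext i; rfl
  rw [e] at h
  exact h

lemma ofZ_mem {y : ℤ → A} (hy : y ∈ zSFT E) :
    (fun p : Site 1 => y (p 0)) ∈ nnSFT1 E := by
  intro p
  have h := hy (p 0)
  exact h

lemma nnSFT1_shift {x : Site 1 → A} (hx : x ∈ nnSFT1 E) (t : Site 1) :
    (fun p => x (p + t)) ∈ nnSFT1 E := by
  intro p
  have h := hx (p + t)
  have e : p + t + 1 = p + 1 + t := by ring
  rw [e] at h
  exact h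

/-- Glue two points of the SFT at a site where they agree. -/
lemma glue_mem {x y : ℤ → A} (hx : x ∈ zSFT E) (hy : y ∈ zSFT E) (m : ℤ)
    (hxy : x m = y m) :
    ∃ z ∈ zSFT E, (∀ n, n ≤ m → z n = x n) ∧ (∀ n, m ≤ n → z n = y n) := by
  refine ⟨fun n => if n ≤ m then x n else y n, ?_, ?_, ?_⟩
  · intro n
    by_cases h1 : n + 1 ≤ m
    · have h2 : n ≤ m := by omega
      simp only [if_pos h1, if_pos h2]
      exact hx n
    · by_cases h2 : n ≤ m
      · have hnm : n = m := by omega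
        subst hnm
        simp only [if_pos h2, if_neg h1, hxy]
        exact hy n
      · simp only [if_neg h1, if_neg h2]
        exact hy n
  · intro n hn; simp [hn]
  · intro n hn
    by_cases h : n ≤ m
    · have hnm : n = m := le_antisymm h hn
      subst hnm
      simp [hxy]
    · simp [h]

/-- Crossing glue: if `b - a` is at least the mixing gap, one can glue the left part of `x`
to the right part of `y` across the gap. -/
lemma cross_mem (g1 : ℕ)
    (Hmix : ∀ a b : A, (∃ x ∈ zSFT E, x 0 = a) → (∃ x ∈ zSFT E, x 0 = b) →
      ∀ t : ℤ, g1 ≤ t.natAbs → ∃ x ∈ zSFT E, x 0 = a ∧ x t = b)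
    {x y : ℤ → A} (hx : x ∈ zSFT E) (hy : y ∈ zSFT E) (a b : ℤ)
    (hab : a < b) (hg : (g1 : ℤ) ≤ b - a) :
    ∃ z ∈ zSFT E, (∀ n, n ≤ a → z n = x n) ∧ (∀ n, b ≤ n → z n = y n) := by
  obtain ⟨w0, hw0, hw0a, hw0b⟩ := Hmix (x a) (y b)
    ⟨fun n => x (n + a), zSFT_shift hx a, by simp⟩
    ⟨fun n => y (n + b), zSFT_shift hy b, by simp⟩
    (b - a) (by omega)
  have hwmem : (fun n => w0 (n + -a)) ∈ zSFT E := zSFT_shift hw0 (-a)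
  set w : ℤ → A := fun n => w0 (n + -a) with hw
  have hwa : w a = x a := by
    have : a + -a = 0 := by ring
    simp only [hw, this, hw0a]
  have hwb : w b = y b := by
    have : b + -a = b - a := by ring
    simp only [hw, this, hw0b]
  obtain ⟨z1, hz1, h1l, h1r⟩ := glue_mem hx hwmem a hwa.symm
  have hz1b : z1 b = y b := by rw [h1r b (le_of_lt hab)]; exact hwb
  obtain ⟨z, hz, h2l, h2r⟩ := glue_mem hz1 hy b hz1b
  exact ⟨z, hz, fun n hn => by rw [h2l n (by omega), h1l n hn], h2r⟩

/-- The main inductive construction: strong irreducibility implies the TSSM gluing,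
by induction on the finite set `V`. -/
lemma key (g1 : ℕ)
    (Hmix : ∀ a b : A, (∃ x ∈ zSFT E, x 0 = a) → (∃ x ∈ zSFT E, x 0 = b) →
      ∀ t : ℤ, g1 ≤ t.natAbs → ∃ x ∈ zSFT E, x 0 = a ∧ x t = b)
    (V : Finset ℤ) :
    ∀ (U S : Finset ℤ),
      Disjoint U S → Disjoint S V → Disjoint U V →
      (∀ p ∈ U, ∀ q ∈ V, g1 + 1 ≤ (p - q).natAbs) →
      ∀ (u s v : ℤ → A) (x : ℤ → A), x ∈ zSFT E →
        (∀ p ∈ U, x p = u p) → (∀ p ∈ S, x p = s p) →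
      ∀ (y : ℤ → A), y ∈ zSFT E →
        (∀ p ∈ S, y p = s p) → (∀ q ∈ V, y q = v q) →
      ∃ z ∈ zSFT E, (∀ p ∈ U, z p = u p) ∧ (∀ p ∈ S, z p = s p) ∧ ∀ q ∈ V, z q = v q := by
  induction V using Finset.strongInduction with
  | _ V ih =>
    intro U S hUS hSV hUV hdist u s v x hx hxu hxs y hy hys hyv
    rcases V.eq_empty_or_nonempty with rfl | ⟨q, hq⟩
    · exact ⟨x, hx, hxu, hxs, by simp⟩
    set V' := V.erase q with hV'
    have hV'ss : V' ⊂ V := Finset.erase_ssubset hq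
    obtain ⟨z0, hz0, hz0u, hz0s, hz0v⟩ :=
      ih V' hV'ss U S hUS (hSV.mono_right (Finset.erase_subset _ _))
        (hUV.mono_right (Finset.erase_subset _ _))
        (fun p hp r hr => hdist p hp r (Finset.mem_of_mem_erase hr))
        u s v x hx hxu hxs y hy hys (fun r hr => hyv r (Finset.mem_of_mem_erase hr))
    set T := U ∪ S ∪ V' with hT
    -- left splice: a configuration agreeing with z0 on T left of q and with y from q on
    have left : ∃ z1 ∈ zSFT E, (∀ n ∈ T, n < q → z1 n = z0 n) ∧ (∀ n, q ≤ n → z1 n = y n) := by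
      set Tm := T.filter (· < q) with hTm
      rcases Tm.eq_empty_or_nonempty with he | hne
      · refine ⟨y, hy, ?_, fun n _ => rfl⟩
        intro n hn hlt
        exact absurd (he ▸ Finset.mem_filter.2 ⟨hn, hlt⟩) (Finset.notMem_empty n)
      · set L := Tm.max' hne with hLdef
        have hLT : L ∈ Tm := Tm.max'_mem hne
        have hLlt : L < q := (Finset.mem_filter.1 hLT).2
        have hLmax : ∀ n ∈ T, n < q → n ≤ L :=
          fun n hn hlt => Tm.le_max' n (Finset.mem_filter.2 ⟨hn, hlt⟩)
        have hLmem : L ∈ U ∨ (L ∈ S ∨ L ∈ V') := by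
          have h := (Finset.mem_filter.1 hLT).1
          simpa [hT, Finset.mem_union, or_assoc] using h
        rcases hLmem with hLU | hLSV
        · have hd := hdist L hLU q hq
          obtain ⟨z1, hz1, hl, hr⟩ := cross_mem g1 Hmix hz0 hy L q hLlt (by omega)
          exact ⟨z1, hz1, fun n hn hlt => hl n (hLmax n hn hlt), hr⟩
        · have hzy : z0 L = y L := by
            rcases hLSV with hLS | hLV'
            · rw [hz0s L hLS, ← hys L hLS]
            · rw [hz0v L hLV', ← hyv L (Finset.mem_of_mem_erase hLV')]
          obtain ⟨z1, hz1, hl, hr⟩ := glue_mem hz0 hy L hzy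
          exact ⟨z1, hz1, fun n hn hlt => hl n (hLmax n hn hlt),
            fun n hn => hr n (by omega)⟩
    obtain ⟨z1, hz1, h1T, h1q⟩ := left
    -- right splice: glue z1 back to z0 on the right of q
    have right : ∃ z ∈ zSFT E, (∀ n, n ≤ q → z n = z1 n) ∧ (∀ n ∈ T, q < n → z n = z0 n) := by
      set Tp := T.filter (fun n => q < n) with hTp
      rcases Tp.eq_empty_or_nonempty with he | hne
      · refine ⟨z1, hz1, fun n _ => rfl, ?_⟩
        intro n hn hlt
        exact absurd (he ▸ Finset.mem_filter.2 ⟨hn, hlt⟩) (Finset.notMem_empty n)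
      · set R := Tp.min' hne with hRdef
        have hRT : R ∈ Tp := Tp.min'_mem hne
        have hRgt : q < R := (Finset.mem_filter.1 hRT).2
        have hRmin : ∀ n ∈ T, q < n → R ≤ n :=
          fun n hn hlt => Tp.min'_le n (Finset.mem_filter.2 ⟨hn, hlt⟩)
        have hRmem : R ∈ U ∨ (R ∈ S ∨ R ∈ V') := by
          have h := (Finset.mem_filter.1 hRT).1
          simpa [hT, Finset.mem_union, or_assoc] using h
        rcases hRmem with hRU | hRSV
        · have hd := hdist R hRU q hq
          obtain ⟨z, hz, hl, hr⟩ := cross_mem g1 Hmix hz1 hz0 q R hRgt (by omega)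
          exact ⟨z, hz, hl, fun n hn hlt => hr n (hRmin n hn hlt)⟩
        · have hz1R : z1 R = z0 R := by
            rw [h1q R (le_of_lt hRgt)]
            rcases hRSV with hRS | hRV'
            · rw [hys R hRS, ← hz0s R hRS]
            · rw [hyv R (Finset.mem_of_mem_erase hRV'), ← hz0v R hRV']
          obtain ⟨z, hz, hl, hr⟩ := glue_mem hz1 hz0 R hz1R
          exact ⟨z, hz, fun n hn => hl n (by omega),
            fun n hn hlt => hr n (hRmin n hn hlt)⟩
    obtain ⟨z, hz, hzl, hzr⟩ := right
    have hmain : ∀ n ∈ T, n ≠ q → z n = z0 n := by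
      intro n hn hne
      rcases lt_or_gt_of_ne hne with h | h
      · rw [hzl n h.le, h1T n hn h]
      · exact hzr n hn h
    have hzq : z q = v q := by
      rw [hzl q le_rfl, h1q q le_rfl]
      exact hyv q hq
    refine ⟨z, hz, ?_, ?_, ?_⟩
    · intro p hp
      have hpq : p ≠ q := by rintro rfl; exact (Finset.disjoint_left.mp hUV hp) hq
      have hpT : p ∈ T := by simp [hT, Finset.mem_union, hp]
      rw [hmain p hpT hpq]; exact hz0u p hp
    · intro p hp
      have hpq : p ≠ q := by rintro rfl; exact (Finset.disjoint_left.mp hSV hp) hq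
      have hpT : p ∈ T := by simp [hT, Finset.mem_union, hp]
      rw [hmain p hpT hpq]; exact hz0s p hp
    · intro r hr
      by_cases hrq : r = q
      · subst hrq; exact hzq
      · have hrV' : r ∈ V' := Finset.mem_erase.2 ⟨hrq, hr⟩
        have hrT : r ∈ T := by simp [hT, Finset.mem_union, hrV']
        rw [hmain r hrT hrq]; exact hz0v r hrV'

end Aux

/-- A nearest-neighbour ℤ SFT is topologically mixing iff it satisfies TSSM with some gap. -/
theorem one_dim_topMixing_iff_tssm {A : Type*} [Fintype A] (E : A → A → Prop) :
    TopMixing (nnSFT1 E) ↔ ∃ g : ℕ, TSSM (nnSFT1 E) g := by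
  constructor
  · -- hard direction: topological mixing implies TSSM
    intro htm
    obtain ⟨g1, hmix⟩ := htm {0} {0} (Set.finite_singleton _) (Set.finite_singleton _)
    -- mixing of globally admissible letters, in the ℤ world
    have Hmix : ∀ a b : A, (∃ x ∈ zSFT E, x 0 = a) → (∃ x ∈ zSFT E, x 0 = b) →
        ∀ t : ℤ, g1 ≤ t.natAbs → ∃ x ∈ zSFT E, x 0 = a ∧ x t = b := by
      rintro a b ⟨xa, hxa, ha⟩ ⟨xb, hxb, hb⟩ t ht
      have h1 : ∃ x ∈ nnSFT1 E, ∀ p ∈ ({0} : Set (Site 1)), x p = (fun _ => a) p := by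
        refine ⟨fun p => xa (p 0), ofZ_mem hxa, ?_⟩
        rintro p rfl
        simpa using ha
      have h2 : ∃ x ∈ nnSFT1 E, ∀ p ∈ ({0} : Set (Site 1)), x p = (fun _ => b) p := by
        refine ⟨fun p => xb (p 0), ofZ_mem hxb, ?_⟩
        rintro p rfl
        simpa using hb
      have hd : ∀ p ∈ ({0} : Set (Site 1)), ∀ q ∈ ({0} : Set (Site 1)),
          g1 ≤ dist1 p (q + fun _ => t) := by
        rintro p rfl r rfl
        have e : dist1 (0 : Site 1) ((0 : Site 1) + (fun _ => t)) = t.natAbs := by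
          rw [dist1_one]
          show ((0 : ℤ) - (0 + t)).natAbs = t.natAbs
          omega
        rw [e]
        exact ht
      obtain ⟨x, hx, hxu, hxv⟩ := hmix (fun _ => a) (fun _ => b) h1 h2 (fun _ => t) hd
      refine ⟨fun n => x (fun _ => n), toZ_mem hx, ?_, ?_⟩
      · have h := hxu 0 rfl
        have e : (fun _ => (0 : ℤ) : Site 1) = 0 := by funext i; rfl
        show x (fun _ => (0 : ℤ)) = a
        rw [e]; exact h
      · have h := hxv 0 rfl
        have e : (fun _ => t : Site 1) = 0 + (fun _ => t) := by funext i; simp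
        show x (fun _ => t) = b
        rw [e]; exact h
    refine ⟨g1 + 1, ?_⟩
    intro U S V hU hS hV hUS hSV hUV hdist u s v hus hsv
    obtain ⟨x, hx, hxu, hxs⟩ := hus
    obtain ⟨y, hy, hys, hyv⟩ := hsv
    set f : Site 1 → ℤ := fun p => p 0 with hf
    set UF : Finset ℤ := hU.toFinset.image f with hUF
    set SF : Finset ℤ := hS.toFinset.image f with hSF
    set VF : Finset ℤ := hV.toFinset.image f with hVF
    have memUF : ∀ n, n ∈ UF ↔ ∃ p ∈ U, f p = n := by
      intro n; simp [hUF, Finset.mem_image, Set.Finite.mem_toFinset]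
    have memSF : ∀ n, n ∈ SF ↔ ∃ p ∈ S, f p = n := by
      intro n; simp [hSF, Finset.mem_image, Set.Finite.mem_toFinset]
    have memVF : ∀ n, n ∈ VF ↔ ∃ p ∈ V, f p = n := by
      intro n; simp [hVF, Finset.mem_image, Set.Finite.mem_toFinset]
    have imgdisj : ∀ (P Q : Set (Site 1)) (hP : P.Finite) (hQ : Q.Finite), Disjoint P Q →
        Disjoint (hP.toFinset.image f) (hQ.toFinset.image f) := by
      intro P Q hP hQ h
      rw [Finset.disjoint_left]
      rintro n hn hn'
      simp only [Finset.mem_image, Set.Finite.mem_toFinset] at hn hn'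
      obtain ⟨p, hp, rfl⟩ := hn
      obtain ⟨r, hr, hrp⟩ := hn'
      have hre : r = p := site_inj hrp
      subst hre
      exact Set.disjoint_left.mp h hp hr
    have hdistF : ∀ n ∈ UF, ∀ m ∈ VF, g1 + 1 ≤ (n - m).natAbs := by
      intro n hn m hm
      obtain ⟨p, hp, rfl⟩ := (memUF n).1 hn
      obtain ⟨r, hr, rfl⟩ := (memVF m).1 hm
      have h := hdist p hp r hr
      rwa [dist1_one] at h
    obtain ⟨z', hz', hz'u, hz's, hz'v⟩ :=
      key g1 Hmix VF UF SF (imgdisj U S hU hS hUS) (imgdisj S V hS hV hSV)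
        (imgdisj U V hU hV hUV) hdistF
        (fun n => u (fun _ => n)) (fun n => s (fun _ => n)) (fun n => v (fun _ => n))
        (fun n => x (fun _ => n)) (toZ_mem hx)
        (by
          intro n hn
          obtain ⟨p, hp, rfl⟩ := (memUF n).1 hn
          show x (fun _ => p 0) = u (fun _ => p 0)
          rw [site_ext p]; exact hxu p hp)
        (by
          intro n hn
          obtain ⟨p, hp, rfl⟩ := (memSF n).1 hn
          show x (fun _ => p 0) = s (fun _ => p 0)
          rw [site_ext p]; exact hxs p hp)
        (fun n => y (fun _ => n)) (toZ_mem hy)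
        (by
          intro n hn
          obtain ⟨p, hp, rfl⟩ := (memSF n).1 hn
          show y (fun _ => p 0) = s (fun _ => p 0)
          rw [site_ext p]; exact hys p hp)
        (by
          intro n hn
          obtain ⟨p, hp, rfl⟩ := (memVF n).1 hn
          show y (fun _ => p 0) = v (fun _ => p 0)
          rw [site_ext p]; exact hyv p hp)
    refine ⟨fun p => z' (p 0), ofZ_mem hz', ?_, ?_, ?_⟩
    · intro p hp
      have h := hz'u (p 0) ((memUF (p 0)).2 ⟨p, hp, rfl⟩)
      rwa [site_ext p] at h
    · intro p hp
      have h := hz's (p 0) ((memSF (p 0)).2 ⟨p, hp, rfl⟩)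
      rwa [site_ext p] at h
    · intro p hp
      have h := hz'v (p 0) ((memVF (p 0)).2 ⟨p, hp, rfl⟩)
      rwa [site_ext p] at h
  · -- easy direction: TSSM implies topological mixing
    rintro ⟨g, htssm⟩ U V hU hV
    refine ⟨g + 1, ?_⟩
    rintro u v ⟨x, hx, hxu⟩ ⟨y, hy, hyv⟩ t hdist
    have hdisj : Disjoint U ((· + t) '' V) := by
      rw [Set.disjoint_left]
      rintro p hp ⟨r, hr, rfl⟩
      have h := hdist (r + t) hp r hr
      rw [dist1_self] at h
      omega
    have hdist' : ∀ p ∈ U, ∀ r ∈ (· + t) '' V, g ≤ dist1 p r := by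
      rintro p hp r ⟨w, hw, rfl⟩
      show g ≤ dist1 p (w + t)
      have := hdist p hp w hw
      omega
    obtain ⟨z, hz, hzu, _, hzv⟩ := htssm U ∅ ((· + t) '' V) hU Set.finite_empty
      (hV.image _) (by simp) (by simp) hdisj hdist'
      u u (fun p => v (p + -t))
      ⟨x, hx, hxu, by simp⟩
      ⟨fun p => y (p + -t), nnSFT1_shift hy (-t), by simp, by
        rintro r ⟨w, hw, rfl⟩
        show y (w + t + -t) = v (w + t + -t)
        have e : w + t + -t = w := by ring
        rw [e]
        exact hyv w hw⟩
    refine ⟨z, hz, hzu, ?_⟩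
    intro r hr
    have h' : z (r + t) = v (r + t + -t) := hzv (r + t) ⟨r, hr, rfl⟩
    have e : r + t + -t = r := by ring
    rwa [e] at h'
end

section
/- There is no Z^2 Markov random field μ with supp(μ) = C_2(4) (the 4-checkerboard shift) satisfying strong spatial mixing with any rate f(n) → 0. -/
open MeasureTheory

/-- Outer boundary of a set of sites. -/
def bd {d : ℕ} (S : Set (Site d)) : Set (Site d) :=
  {p | p ∉ S ∧ ∃ q ∈ S, dist1 p q = 1}

/-- Cylinder set: points agreeing with `u` on `S`. -/
def cyl {d : ℕ} {A : Type*} (S : Set (Site d)) (u : Site d → A) : Set (Site d → A) :=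
  {x | ∀ p ∈ S, x p = u p}

noncomputable def condR {d : ℕ} {A : Type*} [MeasurableSpace A]
    (μ : Measure (Site d → A)) (E B : Set (Site d → A)) : ℝ :=
  (μ (E ∩ B) / μ B).toReal

def ShiftInvariant {d : ℕ} {A : Type*} [MeasurableSpace A]
    (μ : Measure (Site d → A)) : Prop :=
  ∀ (t : Site d) (E : Set (Site d → A)),
    μ ((fun (x : Site d → A) (q : Site d) => x (q + t)) ⁻¹' E) = μ E

/-- Markov random field property. -/
def IsMRF {d : ℕ} {A : Type*} [MeasurableSpace A] (μ : Measure (Site d → A)) : Prop :=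
  ∀ S : Set (Site d), S.Finite → ∀ u : Site d → A,
    ∀ T : Set (Site d), T.Finite → bd S ⊆ T → Disjoint S T →
    ∀ δ : Site d → A, 0 < μ (cyl T δ) →
      condR μ (cyl S u) (cyl T δ) = condR μ (cyl S u) (cyl (bd S) δ)

/-- The support of `μ`: points all of whose cylinder sets have positive measure. -/
def mrfSupport {d : ℕ} {A : Type*} [MeasurableSpace A]
    (μ : Measure (Site d → A)) : Set (Site d → A) :=
  {x | ∀ S : Set (Site d), S.Finite → 0 < μ (cyl S x)}

noncomputable def setD {d : ℕ} (U V : Set (Site d)) : ℕ :=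
  sInf {n : ℕ | ∃ p ∈ U, ∃ q ∈ V, dist1 p q = n}

def SSM {d : ℕ} {A : Type*} [MeasurableSpace A]
    (μ : Measure (Site d → A)) (f : ℕ → ℝ) : Prop :=
  ∀ W : Set (Site d), W.Finite → ∀ U : Set (Site d), U ⊆ W → ∀ u : Site d → A,
    ∀ δ₁ δ₂ : Site d → A, 0 < μ (cyl (bd W) δ₁) → 0 < μ (cyl (bd W) δ₂) →
      |condR μ (cyl U u) (cyl (bd W) δ₁) - condR μ (cyl U u) (cyl (bd W) δ₂)| ≤
        (U.ncard : ℝ) * f (setD U {p ∈ bd W | δ₁ p ≠ δ₂ p})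

/-- The ℤ² 4-checkerboard: proper 4-colourings of ℤ². -/
def C24 : Set (Site 2 → Fin 4) :=
  {x | ∀ (p : Site 2) (i : Fin 2), x p ≠ x (p + unitVec i)}

/-!
Rows `1` and `-1` can be coloured with `2`/`3` so that every site of row `0` sees both `2` and
`3` directly above and below it. A proper 4-colouring agreeing with such a boundary on a long
horizontal corridor must then alternate `0`/`1` along row `0`, starting from the colour of the
left end of the corridor, so the colour in the middle is determined by that end alone. Two
boundary colourings differing only at the two ends of the corridor therefore force different
colours in the middle, a distance `n + 1` away from their disagreement. As `μ` is carried by its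
support `C24`, the conditional probabilities of the middle colour under the two boundaries are
`1` and `0`, which contradicts strong spatial mixing once `f (n + 1) < 1`.
-/

section Lattice

variable {d : ℕ}

theorem Set.Finite.bd {S : Set (Site d)} (hS : S.Finite) : (bd S).Finite := by
  refine (hS.biUnion fun q _ =>
    ((Set.Finite.pi fun _ => Set.finite_Icc (-1 : ℤ) 1).image (q + ·))).subset ?_
  rintro p ⟨-, q, hq, hpq⟩
  refine Set.mem_biUnion hq ⟨p - q, fun i _ => ?_, add_sub_cancel q p⟩
  have : (p i - q i).natAbs ≤ dist1 p q :=
    Finset.single_le_sum (f := fun j => (p j - q j).natAbs) (fun j _ => Nat.zero_le _)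
      (Finset.mem_univ i)
  simp only [Pi.sub_apply, Set.mem_Icc]
  omega

theorem le_setD {U V : Set (Site d)} {m : ℕ} (hU : U.Nonempty) (hV : V.Nonempty)
    (h : ∀ p ∈ U, ∀ q ∈ V, m ≤ dist1 p q) : m ≤ setD U V := by
  obtain ⟨p, hp⟩ := hU
  obtain ⟨q, hq⟩ := hV
  refine le_csInf ⟨_, p, hp, q, hq, rfl⟩ ?_
  rintro _ ⟨p, hp, q, hq, rfl⟩
  exact h p hp q hq

end Lattice

section Measure

variable {d : ℕ} {A : Type*} [MeasurableSpace A]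

theorem measure_compl_mrfSupport [Countable A] (μ : Measure (Site d → A)) :
    μ (mrfSupport μ)ᶜ = 0 := by
  have hcover : (mrfSupport μ)ᶜ ⊆ ⋃ (S : Finset (Site d)) (y : S → A),
      {x | μ (cyl S x) = 0 ∧ ∀ p : S, x p = y p} := by
    intro x hx
    simp only [mrfSupport, Set.mem_compl_iff, Set.mem_ofPred_eq, not_forall, not_lt,
      nonpos_iff_eq_zero] at hx
    obtain ⟨S, hS, hx⟩ := hx
    exact Set.mem_iUnion₂.2 ⟨hS.toFinset, fun p => x p, by simpa using hx, fun _ => rfl⟩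
  refine measure_mono_null hcover (measure_iUnion_null fun S => measure_iUnion_null fun y => ?_)
  rcases Set.eq_empty_or_nonempty {x | μ (cyl S x) = 0 ∧ ∀ p : S, x p = y p}
    with h | ⟨z, hz, hzy⟩
  · rw [h, measure_empty]
  · exact measure_mono_null (fun x hx p hp => (hx.2 ⟨p, hp⟩).trans (hzy ⟨p, hp⟩).symm) hz

variable {μ : Measure (Site d → A)} {E B : Set (Site d → A)}

theorem condR_eq_one [IsFiniteMeasure μ] (hB : μ B ≠ 0) (h : μ (B \ E) = 0) :
    condR μ E B = 1 := by
  have hEB : μ (E ∩ B) = μ B :=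
    measure_congr (ae_eq_set.2 ⟨by rw [Set.sdiff_eq_empty.2 Set.inter_subset_right, measure_empty],
      by rwa [Set.sdiff_inter_self_eq_sdiff]⟩)
  rw [condR, hEB, ENNReal.div_self hB (measure_ne_top μ B), ENNReal.toReal_one]

theorem condR_eq_zero (h : μ (E ∩ B) = 0) : condR μ E B = 0 := by
  rw [condR, h, ENNReal.zero_div, ENNReal.toReal_zero]

theorem SSM.one_le_of_forced [IsFiniteMeasure μ] {f : ℕ → ℝ} (hssm : SSM μ f)
    {X : Set (Site d → A)} (hX : μ Xᶜ = 0) {W : Set (Site d)} (hW : W.Finite) {p : Site d}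
    (hp : p ∈ W) {δ₁ δ₂ : Site d → A} (hδ₁ : 0 < μ (cyl (bd W) δ₁))
    (hδ₂ : 0 < μ (cyl (bd W) δ₂)) (hforced₁ : ∀ x ∈ X ∩ cyl (bd W) δ₁, x p = δ₁ p)
    (hforced₂ : ∀ x ∈ X ∩ cyl (bd W) δ₂, x p = δ₂ p) (hne : δ₁ p ≠ δ₂ p) :
    1 ≤ f (setD {p} {q ∈ bd W | δ₁ q ≠ δ₂ q}) := by
  have h₁ : condR μ (cyl {p} δ₁) (cyl (bd W) δ₁) = 1 := by
    refine condR_eq_one hδ₁.ne' (measure_mono_null ?_ hX)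
    rintro x ⟨hxB, hxE⟩ hxX
    exact hxE fun q hq => hq ▸ hforced₁ x ⟨hxX, hxB⟩
  have h₂ : condR μ (cyl {p} δ₁) (cyl (bd W) δ₂) = 0 := by
    refine condR_eq_zero (measure_mono_null ?_ hX)
    rintro x ⟨hxE, hxB⟩ hxX
    exact hne ((hxE p rfl).symm.trans (hforced₂ x ⟨hxX, hxB⟩))
  simpa [h₁, h₂] using hssm W hW {p} (Set.singleton_subset_iff.2 hp) δ₁ δ₁ δ₂ hδ₁ hδ₂

end Measure

theorem Fin.eq_of_avoid_three_distinct {a b c x y : Fin 4} (hab : a ≠ b) (hac : a ≠ c)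
    (hbc : b ≠ c) (hxa : x ≠ a) (hxb : x ≠ b) (hxc : x ≠ c) (hya : y ≠ a) (hyb : y ≠ b) (hyc : y ≠ c) :
    x = y := by
  omega

namespace C24

variable {x y : Site 2 → Fin 4}

theorem ne_right (hx : x ∈ C24) (a b : ℤ) : x ![a, b] ≠ x ![a + 1, b] := by
  convert hx ![a, b] 0 using 2
  ext i; fin_cases i <;> simp [unitVec]

theorem ne_up (hx : x ∈ C24) (a b : ℤ) : x ![a, b] ≠ x ![a, b + 1] := by
  convert hx ![a, b] 1 using 2
  ext i; fin_cases i <;> simp [unitVec]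

theorem eq_of_eq_on_three_neighbours (hx : x ∈ C24) (hy : y ∈ C24) (a b : ℤ)
    (hl : x ![a, b] = y ![a, b]) (ht : x ![a + 1, b + 1] = y ![a + 1, b + 1])
    (hb : x ![a + 1, b - 1] = y ![a + 1, b - 1])
    (hlt : y ![a, b] ≠ y ![a + 1, b + 1]) (hlb : y ![a, b] ≠ y ![a + 1, b - 1])
    (htb : y ![a + 1, b + 1] ≠ y ![a + 1, b - 1]) :
    x ![a + 1, b] = y ![a + 1, b] := by
  have below {z : Site 2 → Fin 4} (hz : z ∈ C24) : z ![a + 1, b] ≠ z ![a + 1, b - 1] := by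
    simpa using (ne_up hz (a + 1) (b - 1)).symm
  refine Fin.eq_of_avoid_three_distinct hlt hlb htb ?_ ?_ ?_ (ne_right hy a b).symm
    (ne_up hy _ _) (below hy)
  · rw [← hl]; exact (ne_right hx a b).symm
  · rw [← ht]; exact ne_up hx _ _
  · rw [← hb]; exact below hx

end C24

/-- Rows `1` and `-1` are out of phase, and the phase `c` shows only on even rows. -/
def stripes (c : ℤ) (p : Site 2) : Fin 4 :=
  if Even (p 1) then (if Even (p 0 + c) then 0 else 1)
  else (if Even (p 0 + p 1 / 2) then 2 else 3)

theorem stripes_mem_C24 (c : ℤ) : stripes c ∈ C24 := by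
  intro p i
  fin_cases i <;> simp only [stripes] <;> split_ifs <;>
    simp_all [unitVec, Int.even_iff, Int.odd_iff] <;> omega

theorem stripes_zero_ne_one (k : ℤ) : stripes 0 ![k, 0] ≠ stripes 1 ![k, 0] := by
  simp only [stripes]
  split_ifs <;> simp_all [Int.even_iff, Int.odd_iff]
  omega

theorem stripes_around_row_zero (c k : ℤ) :
    stripes c ![k, 0] ≠ stripes c ![k + 1, 1] ∧ stripes c ![k, 0] ≠ stripes c ![k + 1, -1] ∧
      stripes c ![k + 1, 1] ≠ stripes c ![k + 1, -1] := by
  simp only [stripes]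
  split_ifs <;> simp_all [Int.even_iff, Int.odd_iff]

def corridor (n : ℕ) : Set (Site 2) := {p | p 1 = 0 ∧ -(n : ℤ) ≤ p 0 ∧ p 0 ≤ n}

theorem corridor_finite (n : ℕ) : (corridor n).Finite := by
  refine ((Set.finite_Icc (-(n : ℤ)) n).image fun k => ![k, 0]).subset ?_
  rintro p ⟨hp1, hp0⟩
  exact ⟨p 0, hp0, by ext i; fin_cases i <;> simp [hp1]⟩

theorem vertical_mem_bd_corridor {n : ℕ} {k b : ℤ} (hk : -(n : ℤ) ≤ k ∧ k ≤ n)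
    (hb : b.natAbs = 1) : ![k, b] ∈ bd (corridor n) := by
  refine ⟨fun h => ?_, ![k, 0], by simpa [corridor] using hk, by simpa [dist1] using hb⟩
  simp [corridor] at h
  omega

theorem end_mem_bd_corridor {n : ℕ} {k : ℤ} (hk : k = -(n : ℤ) - 1 ∨ k = n + 1) :
    ![k, 0] ∈ bd (corridor n) := by
  rcases hk with rfl | rfl
  · exact ⟨by simp [corridor], ![-n, 0], by simp [corridor], by simp [dist1]; omega⟩
  · exact ⟨by simp [corridor], ![n, 0], by simp [corridor], by simp [dist1]⟩

theorem eq_stripes_of_eqOn_bd {x : Site 2 → Fin 4} (hx : x ∈ C24) {c : ℤ} {n : ℕ}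
    (h : ∀ q ∈ bd (corridor n), x q = stripes c q) {k : ℤ} (hk : -(n : ℤ) - 1 ≤ k)
    (hkn : k ≤ n) : x ![k, 0] = stripes c ![k, 0] := by
  induction k, hk using Int.leInduction with
  | base => exact h _ (end_mem_bd_corridor (.inl rfl))
  | succ k hk ih =>
    have step := C24.eq_of_eq_on_three_neighbours hx (stripes_mem_C24 c) k 0
    simp only [zero_add, zero_sub] at step
    have hk' : -(n : ℤ) ≤ k + 1 ∧ k + 1 ≤ n := by omega
    exact step (ih (by omega)) (h _ (vertical_mem_bd_corridor hk' rfl))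
      (h _ (vertical_mem_bd_corridor hk' rfl)) (stripes_around_row_zero c k).1
      (stripes_around_row_zero c k).2.1 (stripes_around_row_zero c k).2.2

theorem le_dist1_of_stripes_ne {n : ℕ} {q : Site 2} (hq : q ∈ bd (corridor n))
    (hne : stripes 0 q ≠ stripes 1 q) : n + 1 ≤ dist1 ![0, 0] q := by
  have heven : Even (q 1) := by
    by_contra h
    simp [stripes, h] at hne
  obtain ⟨hqW, r, ⟨hr1, hr0⟩, hqr⟩ := hq
  obtain ⟨t, ht⟩ := heven
  simp only [corridor, Set.mem_ofPred_eq] at hqW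
  simp only [dist1, Fin.sum_univ_two, Matrix.cons_val_zero, Matrix.cons_val_one,
    Matrix.cons_val_fin_one, zero_sub, Int.natAbs_neg] at hqr ⊢
  omega

theorem succ_le_setD_stripes (n : ℕ) :
    n + 1 ≤ setD {![0, 0]} {q ∈ bd (corridor n) | stripes 0 q ≠ stripes 1 q} :=
  le_setD (Set.singleton_nonempty _)
    ⟨![n + 1, 0], end_mem_bd_corridor (.inr rfl), stripes_zero_ne_one _⟩
    (by rintro p rfl q ⟨hq, hne⟩; exact le_dist1_of_stripes_ne hq hne)

theorem no_ssm_on_c24_general (μ : Measure (Site 2 → Fin 4)) [IsProbabilityMeasure μ]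
    (hsupp : mrfSupport μ = C24)
    (f : ℕ → ℝ)
    (hftend : Filter.Tendsto f Filter.atTop (nhds 0)) :
    ¬ SSM μ f := by
  intro hssm
  obtain ⟨N, hN⟩ := Filter.eventually_atTop.1 (hftend.eventually_lt_const one_pos)
  have hpos (c : ℤ) : 0 < μ (cyl (bd (corridor N)) (stripes c)) :=
    (hsupp ▸ stripes_mem_C24 c : stripes c ∈ mrfSupport μ) _ (corridor_finite N).bd
  have hforced (c : ℤ) : ∀ x ∈ C24 ∩ cyl (bd (corridor N)) (stripes c),
      x ![0, 0] = stripes c ![0, 0] := fun x ⟨hx, hbd⟩ =>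
    eq_stripes_of_eqOn_bd hx hbd (by omega) (by omega)
  have hone := hssm.one_le_of_forced (hsupp ▸ measure_compl_mrfSupport μ) (corridor_finite N)
    (by simp [corridor]) (hpos 0) (hpos 1) (hforced 0) (hforced 1) (stripes_zero_ne_one 0)
  exact (hN _ (Nat.le_of_succ_le (succ_le_setD_stripes N))).not_ge hone

/-- No shift-invariant MRF fully supported on the ℤ² 4-checkerboard satisfies strong
spatial mixing with any vanishing rate. -/
theorem no_ssm_on_c24 (μ : Measure (Site 2 → Fin 4)) [IsProbabilityMeasure μ]
    (hinv : ShiftInvariant μ) (hmrf : IsMRF μ) (hsupp : mrfSupport μ = C24)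
    (f : ℕ → ℝ) (hf0 : ∀ n, 0 ≤ f n)
    (hftend : Filter.Tendsto f Filter.atTop (nhds 0)) :
    ¬ SSM μ f :=
  no_ssm_on_c24_general μ hsupp f hftend
end
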